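/- Let d ∈ (−1,1), ω ∈ ℝ, γ > 0 and β ∈ ℂ, and let ϱᵃ_∞ be the 2×2 matrix with entries (ϱᵃ_∞)₁₁ = 1/2 + d(γ² + ω²)/(2(γ² + ω² + 2|β|²)), (ϱᵃ_∞)₁₂ = dβ(γ − iω)/(γ² + ω² + 2|β|²), (ϱᵃ_∞)₂₁ = d·conj(β)(γ + iω)/(γ² + ω² + 2|β|²), (ϱᵃ_∞)₂₂ = 1/2 − d(γ² + ω²)/(2(γ² + ω² + 2|β|²)). Then ϱᵃ_∞ is a density matrix: it is Hermitian, positive semidefinite and has trace 1. -/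

import Mathlib

/-!
With `K = γ² + ω²` and `D = K + 2‖β‖²`, the state `ϱᵃ_∞` is `(1 + r · σ) / 2` for a Bloch vector
of squared length `d² K (K + 4‖β‖²) / D² ≤ d² < 1`, since `K (K + 4‖β‖²) = D² - 4‖β‖⁴`.
Positivity then follows from the criterion that a Hermitian `2 × 2` matrix with nonnegative
diagonal and `|ϱ₁₂|² ≤ ϱ₁₁ ϱ₂₂` is positive semidefinite.
-/

open Matrix ComplexOrder

/-- The equilibrium state `ϱᵃ_∞` of the atomic GKSL generator. -/
noncomputable def rhoAInf (d ω γ : ℝ) (β : ℂ) : Matrix (Fin 2) (Fin 2) ℂ :=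
  !![((1 / 2 + d * (γ ^ 2 + ω ^ 2) /
        (2 * (γ ^ 2 + ω ^ 2 + 2 * ‖β‖ ^ 2)) : ℝ) : ℂ),
     (d : ℂ) * β * ((γ : ℂ) - (ω : ℂ) * Complex.I) /
        (((γ ^ 2 + ω ^ 2 + 2 * ‖β‖ ^ 2 : ℝ)) : ℂ);
     (d : ℂ) * (starRingEnd ℂ) β * ((γ : ℂ) + (ω : ℂ) * Complex.I) /
        (((γ ^ 2 + ω ^ 2 + 2 * ‖β‖ ^ 2 : ℝ)) : ℂ),
     ((1 / 2 - d * (γ ^ 2 + ω ^ 2) /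
        (2 * (γ ^ 2 + ω ^ 2 + 2 * ‖β‖ ^ 2)) : ℝ) : ℂ)]

/-- For `a > 0` the matrix splits as `a⁻¹ • u uᴴ + diag(0, e - ‖b‖² / a)` with `u = (a, conj b)`,
a sum of positive semidefinite matrices. -/
theorem Matrix.posSemidef_fin_two_of_sq_norm_le {𝕜 : Type*} [RCLike 𝕜] {a e : ℝ} {b : 𝕜}
    (ha : 0 ≤ a) (he : 0 ≤ e) (hb : ‖b‖ ^ 2 ≤ a * e) :
    (!![(a : 𝕜), b; starRingEnd 𝕜 b, (e : 𝕜)]).PosSemidef := by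
  rcases ha.eq_or_lt with rfl | ha
  · obtain rfl : b = 0 := by simpa using hb
    convert PosSemidef.diagonal (d := ![(0 : 𝕜), (e : 𝕜)]) ?_ using 1
    · ext i j; fin_cases i <;> fin_cases j <;> simp
    · intro i; fin_cases i <;> simp [he]
  set u : Fin 2 → 𝕜 := ![(a : 𝕜), starRingEnd 𝕜 b]
  have hdecomp : !![(a : 𝕜), b; starRingEnd 𝕜 b, (e : 𝕜)] =
      a⁻¹ • vecMulVec u (star u) + diagonal ![0, ((e - ‖b‖ ^ 2 / a : ℝ) : 𝕜)] := by
    have ha' : (a : 𝕜) ≠ 0 := by exact_mod_cast ha.ne'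
    ext i j
    simp only [add_apply, smul_apply, vecMulVec_apply, Pi.star_apply, diagonal_apply,
      RCLike.real_smul_eq_coe_mul]
    fin_cases i <;> fin_cases j <;> simp [u] <;> field_simp
    simp [RCLike.conj_mul]
  have hschur : 0 ≤ e - ‖b‖ ^ 2 / a := sub_nonneg.2 (by rwa [div_le_iff₀ ha, mul_comm])
  rw [hdecomp]
  refine ((posSemidef_vecMulVec_self_star u).smul (inv_nonneg.2 ha.le)).add
    (PosSemidef.diagonal fun i ↦ ?_)
  fin_cases i
  · simp
  · simpa using (RCLike.ofReal_nonneg (K := 𝕜)).2 hschur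

/-- The qubit state with Bloch vector `(2 Re b, -2 Im b, 2 t)`. -/
noncomputable def qubitState (t : ℝ) (b : ℂ) : Matrix (Fin 2) (Fin 2) ℂ :=
  !![((1 / 2 + t : ℝ) : ℂ), b; starRingEnd ℂ b, ((1 / 2 - t : ℝ) : ℂ)]

theorem qubitState_trace (t : ℝ) (b : ℂ) : (qubitState t b).trace = 1 := by
  simp [qubitState, trace_fin_two, Complex.ofReal_add, ← two_mul]

theorem qubitState_posSemidef {t : ℝ} {b : ℂ} (h : t ^ 2 + ‖b‖ ^ 2 ≤ 1 / 4) :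
    (qubitState t b).PosSemidef := by
  have ht : t ^ 2 ≤ (1 / 2) ^ 2 := by nlinarith [sq_nonneg ‖b‖]
  obtain ⟨ht₁, ht₂⟩ := abs_le_of_sq_le_sq' ht (by norm_num)
  exact posSemidef_fin_two_of_sq_norm_le (a := 1 / 2 + t) (e := 1 / 2 - t)
    (by linarith) (by linarith) (by nlinarith)

theorem rhoAInf_eq_qubitState (d ω γ : ℝ) (β : ℂ) :
    rhoAInf d ω γ β = qubitState (d * (γ ^ 2 + ω ^ 2) / (2 * (γ ^ 2 + ω ^ 2 + 2 * ‖β‖ ^ 2)))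
      ((d : ℂ) * β * ((γ : ℂ) - (ω : ℂ) * Complex.I) /
        (((γ ^ 2 + ω ^ 2 + 2 * ‖β‖ ^ 2 : ℝ)) : ℂ)) := by
  rw [rhoAInf, qubitState]
  congr
  simp only [map_div₀, map_mul, map_sub, Complex.conj_ofReal, Complex.conj_I]
  ring

theorem Complex.sq_norm_ofReal_sub_ofReal_mul_I (x y : ℝ) :
    ‖(x : ℂ) - y * Complex.I‖ ^ 2 = x ^ 2 + y ^ 2 := by
  rw [Complex.sq_norm, Complex.normSq_apply]
  simp [sq]

theorem rhoAInf_bloch_le {d ω γ : ℝ} {β : ℂ} (hd : d ^ 2 ≤ 1) (hγ : 0 < γ) :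
    (d * (γ ^ 2 + ω ^ 2) / (2 * (γ ^ 2 + ω ^ 2 + 2 * ‖β‖ ^ 2))) ^ 2 +
      ‖(d : ℂ) * β * ((γ : ℂ) - (ω : ℂ) * Complex.I) /
        (((γ ^ 2 + ω ^ 2 + 2 * ‖β‖ ^ 2 : ℝ)) : ℂ)‖ ^ 2 ≤ 1 / 4 := by
  set K := γ ^ 2 + ω ^ 2
  set B := ‖β‖ ^ 2
  have hKpos : 0 < K := by positivity
  have hBnn : 0 ≤ B := by positivity
  have hnorm : ‖(d : ℂ) * β * ((γ : ℂ) - (ω : ℂ) * Complex.I) / ((K + 2 * B : ℝ) : ℂ)‖ ^ 2 =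
      d ^ 2 * B * K / (K + 2 * B) ^ 2 := by
    rw [norm_div, norm_mul, norm_mul, div_pow, mul_pow, mul_pow,
      Complex.sq_norm_ofReal_sub_ofReal_mul_I, Complex.norm_real, Complex.norm_real,
      Real.norm_eq_abs, Real.norm_eq_abs, sq_abs, sq_abs]
  have hD : 0 < K + 2 * B := by positivity
  rw [hnorm]
  field_simp
  nlinarith [mul_le_mul_of_nonneg_right hd (by positivity : 0 ≤ K * (K + 4 * B))]

/-- **`ϱᵃ_∞` is a density matrix**: it is Hermitian, positive semidefinite and has
trace `1`. -/
theorem rhoAInf_is_density_matrix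
    (d ω γ : ℝ) (β : ℂ) (hd : -1 < d ∧ d < 1) (hγ : 0 < γ) :
    (rhoAInf d ω γ β).IsHermitian ∧ (rhoAInf d ω γ β).PosSemidef ∧
      (rhoAInf d ω γ β).trace = 1 := by
  have hd' : d ^ 2 ≤ 1 := by nlinarith
  rw [rhoAInf_eq_qubitState]
  have hpsd := qubitState_posSemidef (rhoAInf_bloch_le (ω := ω) (β := β) hd' hγ)
  exact ⟨hpsd.isHermitian, hpsd, qubitState_trace _ _⟩
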